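/- The function Φ₁(r) = (1/24) sech²(r) (f₁(r) + f₂(r) + f₃(r)) tends to 0 as r → ±∞, where f₁(r) = r[3 - 8cosh(2r) - cosh(4r)], f₂(r) = sinh(2r)[8 log(2cosh r) - 1] + sinh(4r) log(2cosh r), and f₃(r) = π²/2 + 6r² + 6 Li₂(-e^{-2r}). -/

import Mathlib

open Filter

/-- The real dilogarithm, defined for x ≤ 1 by Li₂(x) = -∫_0^x log(1-t)/t dt. -/
noncomputable def Li2 (x : ℝ) : ℝ := -∫ t in (0:ℝ)..x, Real.log (1 - t) / t

noncomputable def Phi1 (r : ℝ) : ℝ :=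
  (1 / 24) * (1 / Real.cosh r) ^ 2 *
    ((r * (3 - 8 * Real.cosh (2 * r) - Real.cosh (4 * r)))
      + (Real.sinh (2 * r) * (8 * Real.log (2 * Real.cosh r) - 1)
          + Real.sinh (4 * r) * Real.log (2 * Real.cosh r))
      + (Real.pi ^ 2 / 2 + 6 * r ^ 2 + 6 * Li2 (-Real.exp (-2 * r))))

open Topology Real

/-!
Split `Φ₁ = (sech² r · (f₁ + f₂) + sech² r · f₃) / 24`.

With `x = e^{-2r}` one has `log (2 cosh r) = r + log (1 + x)`, and `sech² r · (f₁ + f₂)`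
becomes a rational expression in `r x`, `x`, `log (1 + x)` and `log (1 + x) / x`; as `r → +∞`
these tend to `0, 0, 0, 1`, where the expression vanishes. Since `f₁ + f₂` is odd and `sech²`
is even, the same holds as `r → -∞`.

For the other term, `log (1 + s) ≤ 2 √s` gives `|Li₂ (-y)| ≤ 4 √y`, so
`|f₃ r| ≤ π² / 2 + 6 r² + 48 cosh r`, which `sech² r ≤ sech r` beats in both directions.
-/

lemma tendsto_log_one_add_div_self :
    Tendsto (fun x : ℝ => log (1 + x) / x) (𝓝[≠] 0) (𝓝 1) := by
  simpa [div_eq_inv_mul] using (hasDerivAt_log one_ne_zero).tendsto_slope_zero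

lemma log_two_mul_cosh (r : ℝ) : log (2 * cosh r) = r + log (1 + exp (-2 * r)) := by
  rw [← log_exp r, ← log_mul (exp_pos r).ne' (by positivity), log_exp, cosh_eq, mul_add,
    ← exp_add]
  ring_nf

lemma log_one_add_le_two_mul_sqrt {s : ℝ} (hs : 0 ≤ s) : log (1 + s) ≤ 2 * √s := by
  have h : 1 + s ≤ (1 + √s) ^ 2 := by nlinarith [sq_sqrt hs, sqrt_nonneg s]
  calc log (1 + s) ≤ log ((1 + √s) ^ 2) := log_le_log (by positivity) h
    _ = 2 * log (1 + √s) := by rw [log_pow]; norm_num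
    _ ≤ 2 * √s := by gcongr; linarith [log_le_sub_one_of_pos (by positivity : 0 < 1 + √s)]

lemma tendsto_pow_div_cosh_cocompact (n : ℕ) :
    Tendsto (fun r : ℝ => r ^ n / cosh r) (cocompact ℝ) (𝓝 0) := by
  have h := ((tendsto_pow_mul_exp_neg_atTop_nhds_zero n).comp
    (tendsto_norm_cocompact_atTop (E := ℝ))).const_mul 2
  rw [mul_zero] at h
  refine squeeze_zero_norm (fun r => ?_) h
  have hcosh : exp |r| ≤ 2 * cosh r := by
    rw [← cosh_abs, cosh_eq]; linarith [exp_pos (-|r|)]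
  rw [norm_div, norm_pow, norm_of_nonneg (cosh_pos r).le, div_le_iff₀ (cosh_pos r), norm_eq_abs]
  calc |r| ^ n = |r| ^ n * exp (-|r|) * exp |r| := by rw [mul_assoc, ← exp_add]; simp
    _ ≤ |r| ^ n * exp (-|r|) * (2 * cosh r) := by gcongr
    _ = 2 * (|r| ^ n * exp (-|r|)) * cosh r := by ring

lemma Li2_neg (y : ℝ) : Li2 (-y) = -∫ s in (0 : ℝ)..y, log (1 + s) / s := by
  have h := intervalIntegral.integral_comp_neg (a := 0) (b := y) fun t => log (1 - t) / t
  simp only [sub_neg_eq_add, div_neg, intervalIntegral.integral_neg, neg_zero] at h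
  rw [Li2, intervalIntegral.integral_symm, neg_neg, h]

lemma abs_Li2_neg_le {y : ℝ} (hy : 0 ≤ y) : |Li2 (-y)| ≤ 4 * √y := by
  have hbound : ∀ s ∈ Set.Ioc 0 y, ‖log (1 + s) / s‖ ≤ 2 * s ^ (-(1 / 2) : ℝ) := by
    rintro s ⟨hs, -⟩
    rw [norm_of_nonneg (div_nonneg (log_nonneg (by linarith)) hs.le), rpow_neg hs.le,
      ← sqrt_eq_rpow, div_le_iff₀ hs]
    calc log (1 + s) ≤ 2 * √s := log_one_add_le_two_mul_sqrt hs.le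
      _ = 2 * (√s)⁻¹ * s := by field_simp; rw [sq_sqrt hs.le]
  have hint : ∫ s in (0 : ℝ)..y, 2 * s ^ (-(1 / 2) : ℝ) = 4 * √y := by
    rw [intervalIntegral.integral_const_mul, integral_rpow (by norm_num), sqrt_eq_rpow]
    norm_num
    ring
  rw [Li2_neg, abs_neg, ← norm_eq_abs, ← hint]
  exact intervalIntegral.norm_integral_le_of_norm_le hy (MeasureTheory.ae_of_all _ hbound)
    ((intervalIntegral.intervalIntegrable_rpow' (by norm_num)).const_mul 2)

noncomputable def f12 (r : ℝ) : ℝ :=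
  r * (3 - 8 * cosh (2 * r) - cosh (4 * r))
    + (sinh (2 * r) * (8 * log (2 * cosh r) - 1) + sinh (4 * r) * log (2 * cosh r))

noncomputable def f3 (r : ℝ) : ℝ :=
  π ^ 2 / 2 + 6 * r ^ 2 + 6 * Li2 (-exp (-2 * r))

lemma Phi1_eq_sech_sq_mul_add (r : ℝ) :
    Phi1 r = 1 / 24 * ((1 / cosh r) ^ 2 * f12 r + (1 / cosh r) ^ 2 * f3 r) := by
  rw [Phi1, f12, f3]
  ring

lemma f12_neg (r : ℝ) : f12 (-r) = -f12 r := by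
  simp only [f12, mul_neg, sinh_neg, cosh_neg]
  ring

lemma sech_sq_mul_f12_eq (r : ℝ) :
    (1 / cosh r) ^ 2 * f12 r =
      4 / (1 + exp (-2 * r)) ^ 2 *
        (r * exp (-2 * r) * (3 - 8 * exp (-2 * r) - exp (-2 * r) ^ 2)
          + (1 - exp (-2 * r) ^ 2) * (8 * log (1 + exp (-2 * r)) - 1) / 2
          + (1 - exp (-2 * r) ^ 4) * (log (1 + exp (-2 * r)) / exp (-2 * r)) / 2) := by
  rw [f12, log_two_mul_cosh]
  generalize log (1 + exp (-2 * r)) = L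
  have e2 : exp (2 * r) = exp r ^ 2 := by rw [← exp_nat_mul]; norm_num
  have e4 : exp (4 * r) = exp r ^ 4 := by rw [← exp_nat_mul]; norm_num
  have em2 : exp (-2 * r) = (exp r ^ 2)⁻¹ := by rw [← e2, ← exp_neg]; ring_nf
  simp only [cosh_eq, sinh_eq, exp_neg, e2, e4, em2]
  have := exp_pos r
  field_simp
  ring

lemma tendsto_sech_sq_mul_f12_atTop :
    Tendsto (fun r => (1 / cosh r) ^ 2 * f12 r) atTop (𝓝 0) := by
  have hx : Tendsto (fun r : ℝ => exp (-2 * r)) atTop (𝓝[≠] 0) :=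
    tendsto_nhdsWithin_of_tendsto_nhds_of_eventually_within _
      (tendsto_exp_atBot.comp (tendsto_id.const_mul_atTop_of_neg (by norm_num)))
      (Eventually.of_forall fun r => (exp_pos _).ne')
  have hx0 : Tendsto (fun r : ℝ => exp (-2 * r)) atTop (𝓝 0) :=
    hx.mono_right nhdsWithin_le_nhds
  have hrx : Tendsto (fun r : ℝ => r * exp (-2 * r)) atTop (𝓝 0) := by
    have h := ((tendsto_pow_mul_exp_neg_atTop_nhds_zero 1).comp
      (tendsto_id.const_mul_atTop two_pos)).const_mul (1 / 2 : ℝ)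
    rw [mul_zero] at h
    refine h.congr fun r => ?_
    simp only [Function.comp, id]
    ring_nf
  have hL : Tendsto (fun r : ℝ => log (1 + exp (-2 * r))) atTop (𝓝 0) := by
    simpa using (hx0.const_add 1).log (by norm_num)
  have hq := tendsto_log_one_add_div_self.comp hx
  have h := ((tendsto_const_nhds (x := (4 : ℝ))).div ((hx0.const_add 1).pow 2) (by norm_num)).mul
    (((hrx.mul (((tendsto_const_nhds (x := (3 : ℝ))).sub (hx0.const_mul 8)).sub (hx0.pow 2))).add
      ((((tendsto_const_nhds (x := (1 : ℝ))).sub (hx0.pow 2)).mul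
        ((hL.const_mul 8).sub (tendsto_const_nhds (x := (1 : ℝ))))).div_const 2)).add
      ((((tendsto_const_nhds (x := (1 : ℝ))).sub (hx0.pow 4)).mul hq).div_const 2))
  simp only [funext sech_sq_mul_f12_eq]
  norm_num at h ⊢
  exact h

lemma tendsto_sech_sq_mul_f12_atBot :
    Tendsto (fun r => (1 / cosh r) ^ 2 * f12 r) atBot (𝓝 0) := by
  have h := (tendsto_sech_sq_mul_f12_atTop.comp tendsto_neg_atBot_atTop).neg
  rw [neg_zero] at h
  refine h.congr fun r => ?_
  simp [f12_neg]

lemma abs_f3_le (r : ℝ) : |f3 r| ≤ π ^ 2 / 2 + 6 * r ^ 2 + 48 * cosh r := by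
  have hLi : |Li2 (-exp (-2 * r))| ≤ 4 * exp (-r) := by
    have h := abs_Li2_neg_le (exp_pos (-2 * r)).le
    rwa [← exp_half, show -2 * r / 2 = -r by ring] at h
  have hcosh : exp (-r) ≤ 2 * cosh r := by rw [cosh_eq]; linarith [exp_pos r]
  calc |f3 r| ≤ |π ^ 2 / 2 + 6 * r ^ 2| + |6 * Li2 (-exp (-2 * r))| := abs_add_le _ _
    _ ≤ π ^ 2 / 2 + 6 * r ^ 2 + 48 * cosh r := by
      rw [abs_of_nonneg (by positivity), abs_mul, abs_of_pos (by norm_num : (0 : ℝ) < 6)]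
      linarith

lemma tendsto_sech_sq_mul_f3_cocompact :
    Tendsto (fun r => (1 / cosh r) ^ 2 * f3 r) (cocompact ℝ) (𝓝 0) := by
  have h := ((tendsto_pow_div_cosh_cocompact 0).const_mul (π ^ 2 / 2 + 48)).add
    ((tendsto_pow_div_cosh_cocompact 2).const_mul 6)
  rw [mul_zero, mul_zero, add_zero] at h
  refine squeeze_zero_norm (fun r => ?_) h
  have hc := cosh_pos r
  have hc1 := one_le_cosh r
  rw [norm_mul, norm_pow, norm_div, norm_one, norm_of_nonneg hc.le, norm_eq_abs]
  have hsq : (1 / cosh r) ^ 2 ≤ 1 / cosh r :=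
    pow_le_of_le_one (by positivity) (div_le_one_of_le₀ hc1 hc.le) two_ne_zero
  calc (1 / cosh r) ^ 2 * |f3 r| ≤ (1 / cosh r) ^ 2 * (π ^ 2 / 2 + 6 * r ^ 2 + 48 * cosh r) := by
        gcongr; exact abs_f3_le r
    _ = (1 / cosh r) ^ 2 * (π ^ 2 / 2 + 6 * r ^ 2) + 48 * (1 / cosh r) := by
        field_simp
    _ ≤ 1 / cosh r * (π ^ 2 / 2 + 6 * r ^ 2) + 48 * (1 / cosh r) := by gcongr
    _ = (π ^ 2 / 2 + 48) * (r ^ 0 / cosh r) + 6 * (r ^ 2 / cosh r) := by ring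

/-- Φ₁(r) → 0 as r → ±∞. -/
theorem Phi1_vanishes_at_infinity :
    Tendsto Phi1 atTop (nhds 0) ∧ Tendsto Phi1 atBot (nhds 0) := by
  simp only [funext Phi1_eq_sech_sq_mul_add]
  constructor
  · simpa using (tendsto_sech_sq_mul_f12_atTop.add
      (tendsto_sech_sq_mul_f3_cocompact.mono_left atTop_le_cocompact)).const_mul (1 / 24 : ℝ)
  · simpa using (tendsto_sech_sq_mul_f12_atBot.add
      (tendsto_sech_sq_mul_f3_cocompact.mono_left atBot_le_cocompact)).const_mul (1 / 24 : ℝ)
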